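/- arXiv:2302.05407 — 3 statements merged into one kernel-verified Lean document; each statement's English description precedes it below -/
import Mathlib

section
/- For each n let G ~ G(p^{(n)}) be an inhomogeneous random graph on [n], and suppose sqrt(n) · p_max(n) → 0 as n → ∞. Then for any choice of integers k_n ∈ [n], the probability that | |Z_{k_n}| − E[|Z_{k_n}|] | ≤ (1/3) n^{3/4} tends to 1 as n → ∞. -/
/-!
Chebyshev's inequality. Write `|Z_k| = ∑ᵢ Xᵢ` with `Xᵢ = 1[deg i ≤ k]`. For `i ≠ j`, deleting the
edge `ij` turns `Xᵢ, Xⱼ` into functions of the disjoint edge sets at `i` and at `j`, hence into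
independent variables, and it changes them only on an event of probability `p_ij ≤ p_max`. So
`cov(Xᵢ, Xⱼ) ≤ 3 p_max`, `Var |Z_k| ≤ n/4 + 3 n² p_max`, and the probability of a deviation above
`n^{3/4}/3` is at most `9/(4√n) + 27 √n p_max → 0`.
-/

open MeasureTheory ProbabilityTheory Filter Real
open scoped ENNReal Classical

noncomputable section

namespace GraphMatching

variable {n : ℕ}

/-- The ordered representative of the unordered pair `{i, j}`. -/
def eidx (i j : Fin n) : Fin n × Fin n := if i ≤ j then (i, j) else (j, i)

/-- A space of edge indicators, one for each (ordered) pair of vertices;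
only the representatives with `i ≤ j` are ever read off. -/
abbrev EdgeSpace (n : ℕ) := Fin n × Fin n → Bool

/-- Bernoulli measure on `Bool` with success probability `p` (clamped to `[0,1]`). -/
def bern (p : ℝ) : Measure Bool :=
  (PMF.bernoulli (min (Real.toNNReal p) 1) (min_le_right _ _)).toMeasure

/-- The law of an inhomogeneous random graph `G(p)`, encoded by independent edge
indicators with `P((i,j) present) = p i j` for the representative pairs. -/
def edgeMeasure (n : ℕ) (p : Fin n → Fin n → ℝ) : Measure (EdgeSpace n) :=
  Measure.pi fun e => bern (p e.1 e.2)

/-- The adjacency relation of the graph encoded by `g`. -/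
def adjOf (g : EdgeSpace n) (i j : Fin n) : Prop := i ≠ j ∧ g (eidx i j) = true

/-- The degree of vertex `i` in the graph encoded by `g`. -/
def deg (g : EdgeSpace n) (i : Fin n) : ℕ :=
  (Finset.univ.filter fun j => adjOf g i j).card

/-- `|Z_k|`: the number of vertices of degree at most `k`. -/
def Zcard (k : ℕ) (g : EdgeSpace n) : ℕ :=
  (Finset.univ.filter fun i => deg g i ≤ k).card

end GraphMatching

end

theorem DependsOn.eq_comp_updateFinset_restrict {ι β : Type*} [DecidableEq ι] {α : ι → Type*}
    {f : (Π i, α i) → β} {s : Finset ι} (hf : DependsOn f s) (x : Π i, α i) :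
    f = (f ∘ Function.updateFinset x s) ∘ s.restrict :=
  funext fun _ => hf fun i hi => by simp [Function.updateFinset, Finset.mem_coe.1 hi]

open scoped Topology

namespace ProbabilityTheory

theorem indepFun_pi_of_dependsOn {ι : Type*} [Fintype ι] {Ω : ι → Type*}
    [∀ i, MeasurableSpace (Ω i)] {μ : ∀ i, Measure (Ω i)} [∀ i, IsProbabilityMeasure (μ i)]
    {β γ : Type*} [MeasurableSpace β] [MeasurableSpace γ]
    {f : (Π i, Ω i) → β} {g : (Π i, Ω i) → γ} {S T : Finset ι} (hST : Disjoint S T)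
    (hf : DependsOn f S) (hg : DependsOn g T) (mf : Measurable f) (mg : Measurable g) :
    IndepFun f g (Measure.pi μ) := by
  obtain ⟨x⟩ := nonempty_of_isProbabilityMeasure (Measure.pi μ)
  have hcoord := (iIndepFun_pi (μ := μ) (X := fun _ => id) fun _ => aemeasurable_id)
    |>.indepFun_finset S T hST fun i => measurable_pi_apply i
  classical
  rw [hf.eq_comp_updateFinset_restrict x, hg.eq_comp_updateFinset_restrict x]
  exact hcoord.comp (mf.comp measurable_updateFinset) (mg.comp measurable_updateFinset)

lemma tendsto_measure_abs_sub_integral_le {Ω : ℕ → Type*} {mΩ : ∀ n, MeasurableSpace (Ω n)}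
    {μ : ∀ n, Measure (Ω n)} [∀ n, IsProbabilityMeasure (μ n)] {X : ∀ n, Ω n → ℝ}
    (hX : ∀ n, MemLp (X n) 2 (μ n)) {t : ℕ → ℝ} (ht : ∀ᶠ n in atTop, 0 < t n)
    (hvar : Tendsto (fun n => Var[X n; μ n] / t n ^ 2) atTop (𝓝 0)) :
    Tendsto (fun n => μ n {ω | |X n ω - (μ n)[X n]| ≤ t n}) atTop (𝓝 1) := by
  have hlower : ∀ᶠ n in atTop,
      1 - ENNReal.ofReal (Var[X n; μ n] / t n ^ 2) ≤ μ n {ω | |X n ω - (μ n)[X n]| ≤ t n} := by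
    filter_upwards [ht] with n htn
    have hcompl : μ n {ω | |X n ω - (μ n)[X n]| ≤ t n}ᶜ
        ≤ ENNReal.ofReal (Var[X n; μ n] / t n ^ 2) := by
      refine le_trans (measure_mono fun ω hω => ?_) (meas_ge_le_variance_div_sq (hX n) htn)
      exact (not_le.1 (Set.notMem_ofPred_iff.1 hω)).le
    rw [tsub_le_iff_right, ← measure_univ (μ := μ n)]
    exact (measure_univ_le_add_compl _).trans (add_le_add_right hcompl _)
  have hlim : Tendsto (fun n => 1 - ENNReal.ofReal (Var[X n; μ n] / t n ^ 2)) atTop (𝓝 1) := by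
    simpa using ENNReal.Tendsto.sub tendsto_const_nhds (ENNReal.tendsto_ofReal hvar) (by simp)
  exact tendsto_of_tendsto_of_tendsto_of_le_of_le' hlim tendsto_const_nhds hlower
    (Eventually.of_forall fun n => prob_le_one)

section UnitInterval

variable {Ω : Type*} {mΩ : MeasurableSpace Ω} {μ : Measure Ω} [IsProbabilityMeasure μ]

lemma abs_integral_sub_le_measureReal_of_eqOn_compl {X Y : Ω → ℝ} {A : Set Ω}
    (hX : ∀ ω, X ω ∈ Set.Icc 0 1) (hY : ∀ ω, Y ω ∈ Set.Icc 0 1)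
    (mX : AEMeasurable X μ) (mY : AEMeasurable Y μ) (hA : MeasurableSet A)
    (hXY : Set.EqOn X Y Aᶜ) :
    |μ[X] - μ[Y]| ≤ μ.real A := by
  have iX := Integrable.of_mem_Icc 0 1 mX (ae_of_all _ hX)
  have iY := Integrable.of_mem_Icc 0 1 mY (ae_of_all _ hY)
  have hpt : ∀ ω, |X ω - Y ω| ≤ A.indicator 1 ω := by
    intro ω
    by_cases hω : ω ∈ A
    · simp only [Set.indicator_of_mem hω, Pi.one_apply, abs_le]
      constructor <;> linarith [(hX ω).1, (hX ω).2, (hY ω).1, (hY ω).2]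
    · simp [Set.indicator_of_notMem hω, hXY hω]
  calc |μ[X] - μ[Y]| = |∫ ω, X ω - Y ω ∂μ| := by rw [integral_sub iX iY]
    _ ≤ ∫ ω, |X ω - Y ω| ∂μ := abs_integral_le_integral_abs
    _ ≤ ∫ ω, A.indicator 1 ω ∂μ :=
        integral_mono (iX.sub iY).abs ((integrable_const 1).indicator hA) hpt
    _ = μ.real A := integral_indicator_one hA

lemma covariance_le_of_eqOn_compl {X Y X' Y' : Ω → ℝ} {A : Set Ω}
    (hX : ∀ ω, X ω ∈ Set.Icc 0 1) (hY : ∀ ω, Y ω ∈ Set.Icc 0 1)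
    (hX' : ∀ ω, X' ω ∈ Set.Icc 0 1) (hY' : ∀ ω, Y' ω ∈ Set.Icc 0 1)
    (mX : AEMeasurable X μ) (mY : AEMeasurable Y μ)
    (mX' : AEMeasurable X' μ) (mY' : AEMeasurable Y' μ) (hA : MeasurableSet A)
    (hXX' : Set.EqOn X X' Aᶜ) (hYY' : Set.EqOn Y Y' Aᶜ) (hindep : IndepFun X' Y' μ) :
    cov[X, Y; μ] ≤ 3 * μ.real A := by
  have mean_mem {Z : Ω → ℝ} (hZ : ∀ ω, Z ω ∈ Set.Icc 0 1) (mZ : AEMeasurable Z μ) :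
      μ[Z] ∈ Set.Icc 0 1 := by
    refine ⟨integral_nonneg fun ω => (hZ ω).1, ?_⟩
    calc μ[Z] ≤ ∫ _, (1 : ℝ) ∂μ :=
          integral_mono (Integrable.of_mem_Icc 0 1 mZ (ae_of_all _ hZ)) (integrable_const 1)
            fun ω => (hZ ω).2
      _ = 1 := by simp
  have hprod := abs_integral_sub_le_measureReal_of_eqOn_compl (X := X * Y) (Y := X' * Y')
    (fun ω => unitInterval.mul_mem (hX ω) (hY ω))
    (fun ω => unitInterval.mul_mem (hX' ω) (hY' ω))
    (mX.mul mY) (mX'.mul mY') hA fun ω hω => by simp [hXX' hω, hYY' hω]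
  rw [hindep.integral_mul_eq_mul_integral mX'.aestronglyMeasurable mY'.aestronglyMeasurable]
    at hprod
  have hmeanX := abs_integral_sub_le_measureReal_of_eqOn_compl hX hX' mX mX' hA hXX'
  have hmeanY := abs_integral_sub_le_measureReal_of_eqOn_compl hY hY' mY mY' hA hYY'
  obtain ⟨hEX0, hEX1⟩ := mean_mem hX mX
  obtain ⟨hEY'0, hEY'1⟩ := mean_mem hY' mY'
  rw [covariance_eq_sub (memLp_of_bounded (ae_of_all _ hX) mX.aestronglyMeasurable 2)
    (memLp_of_bounded (ae_of_all _ hY) mY.aestronglyMeasurable 2)]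
  rw [abs_le] at hprod hmeanX hmeanY
  nlinarith

lemma variance_sum_le_of_covariance_le {ι : Type*} [Fintype ι] {X : ι → Ω → ℝ} {c : ℝ}
    (hc : 0 ≤ c) (hX : ∀ i ω, X i ω ∈ Set.Icc 0 1) (mX : ∀ i, AEMeasurable (X i) μ)
    (hcov : ∀ i j, i ≠ j → cov[X i, X j; μ] ≤ c) :
    Var[fun ω => ∑ i, X i ω; μ] ≤ Fintype.card ι / 4 + Fintype.card ι ^ 2 * c := by
  have hterm (i j : ι) : cov[X i, X j; μ] ≤ (if i = j then 1 / 4 else 0) + c := by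
    rcases eq_or_ne i j with rfl | hij
    · rw [if_pos rfl, covariance_self (mX i)]
      linarith [variance_le_sq_of_bounded (ae_of_all _ (hX i)) (mX i)]
    · simpa [hij] using hcov i j hij
  rw [variance_fun_sum fun i =>
    memLp_of_bounded (ae_of_all _ (hX i)) (mX i).aestronglyMeasurable 2]
  calc ∑ i, ∑ j, cov[X i, X j; μ] ≤ ∑ i : ι, ∑ j : ι, ((if i = j then 1 / 4 else 0) + c) :=
        Finset.sum_le_sum fun i _ => Finset.sum_le_sum fun j _ => hterm i j
    _ = Fintype.card ι / 4 + Fintype.card ι ^ 2 * c := by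
        simp [Finset.sum_add_distrib]
        ring

end UnitInterval

end ProbabilityTheory

namespace GraphMatching

variable {n : ℕ}

instance (q : ℝ) : IsProbabilityMeasure (bern q) := by unfold bern; infer_instance

instance (p : Fin n → Fin n → ℝ) : IsProbabilityMeasure (edgeMeasure n p) := by
  unfold edgeMeasure; infer_instance

lemma eidx_comm (a b : Fin n) : eidx a b = eidx b a := by
  unfold eidx
  split_ifs with hab hba hba <;> first | rfl | simp [le_antisymm hab hba] | omega

lemma eidx_eq_eidx_iff {a b c d : Fin n} :
    eidx a b = eidx c d ↔ (a = c ∧ b = d) ∨ (a = d ∧ b = c) := by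
  refine ⟨fun h => ?_, ?_⟩
  · unfold eidx at h; split_ifs at h <;> simp only [Prod.mk.injEq] at h <;> tauto
  · rintro (⟨rfl, rfl⟩ | ⟨rfl, rfl⟩)
    exacts [rfl, eidx_comm _ _]

lemma bern_true_le (q : ℝ) : bern q {true} ≤ ENNReal.ofReal q := by
  rw [bern, PMF.toMeasure_apply_singleton _ _ (measurableSet_singleton _)]
  change ((min q.toNNReal 1 : NNReal) : ℝ≥0∞) ≤ ENNReal.ofReal q
  exact ENNReal.coe_le_coe.2 (min_le_left _ _)

lemma edgeMeasure_real_edge_le (p : Fin n → Fin n → ℝ) (e : Fin n × Fin n) (hp : 0 ≤ p e.1 e.2) :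
    (edgeMeasure n p).real {g | g e = true} ≤ p e.1 e.2 := by
  have heval : (edgeMeasure n p) {g | g e = true} = bern (p e.1 e.2) {true} :=
    (measurePreserving_eval (fun e : Fin n × Fin n => bern (p e.1 e.2)) e).measure_preimage
      (s := {true}) (measurableSet_singleton true).nullMeasurableSet
  rw [measureReal_def, heval]
  exact (ENNReal.toReal_mono ENNReal.ofReal_ne_top (bern_true_le _)).trans_eq
    (ENNReal.toReal_ofReal hp)

noncomputable def degExcept (g : EdgeSpace n) (i j : Fin n) : ℕ :=
  (Finset.univ.filter fun l => l ≠ j ∧ adjOf g i l).card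

def starExcept (i j : Fin n) : Finset (Fin n × Fin n) :=
  (Finset.univ.filter (· ≠ j)).image (eidx i)

lemma deg_eq_degExcept {g : EdgeSpace n} {i j : Fin n} (h : g (eidx i j) = false) :
    deg g i = degExcept g i j := by
  unfold deg degExcept
  congr 1
  refine Finset.filter_congr fun l _ => ⟨fun hl => ⟨?_, hl⟩, And.right⟩
  rintro rfl
  simp [adjOf, h] at hl

lemma dependsOn_degExcept (i j : Fin n) :
    DependsOn (fun g : EdgeSpace n => degExcept g i j) (starExcept i j) := by
  intro g g' h
  refine congrArg Finset.card (Finset.filter_congr fun l _ => and_congr_right fun hl => ?_)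
  rw [adjOf, adjOf, h (eidx i l) (by simpa [starExcept] using ⟨l, hl, rfl⟩)]

lemma disjoint_starExcept {i j : Fin n} (hij : i ≠ j) :
    Disjoint (starExcept i j) (starExcept j i) := by
  simp only [starExcept, Finset.disjoint_left, Finset.mem_image, Finset.mem_filter,
    Finset.mem_univ, true_and, not_exists, not_and]
  rintro _ ⟨l, hl, rfl⟩ m hm h
  rcases eidx_eq_eidx_iff.1 h with ⟨hji, -⟩ | ⟨-, hmi⟩
  · exact hij hji.symm
  · exact hm hmi

lemma covariance_ite_deg_le (p : Fin n → Fin n → ℝ) (k : ℕ) {i j : Fin n} (hij : i ≠ j) :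
    cov[fun g => if deg g i ≤ k then (1 : ℝ) else 0, fun g => if deg g j ≤ k then 1 else 0;
      edgeMeasure n p] ≤ 3 * (edgeMeasure n p).real {g | g (eidx i j) = true} := by
  have mem_Icc (P : Prop) [Decidable P] : (if P then (1 : ℝ) else 0) ∈ Set.Icc 0 1 := by
    split <;> simp
  refine covariance_le_of_eqOn_compl (X' := fun g => if degExcept g i j ≤ k then 1 else 0)
    (Y' := fun g => if degExcept g j i ≤ k then 1 else 0) (fun _ => mem_Icc _)
    (fun _ => mem_Icc _) (fun _ => mem_Icc _) (fun _ => mem_Icc _) .of_discrete .of_discrete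
    .of_discrete .of_discrete .of_discrete ?_ ?_ ?_
  · intro g hg
    simp [deg_eq_degExcept (Bool.eq_false_iff.2 hg)]
  · intro g hg
    rw [eidx_comm] at hg
    simp [deg_eq_degExcept (Bool.eq_false_iff.2 hg)]
  · exact indepFun_pi_of_dependsOn (disjoint_starExcept hij)
      (fun _ _ h => by simp only [dependsOn_degExcept i j h])
      (fun _ _ h => by simp only [dependsOn_degExcept j i h]) .of_discrete .of_discrete

lemma variance_Zcard_le (p : Fin n → Fin n → ℝ) (hp0 : ∀ a b, 0 ≤ p a b) {P : ℝ}
    (hP : ∀ a b, p a b ≤ P) (hP0 : 0 ≤ P) (k : ℕ) :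
    Var[fun g => (Zcard k g : ℝ); edgeMeasure n p] ≤ n / 4 + n ^ 2 * (3 * P) := by
  have hsum : (fun g : EdgeSpace n => (Zcard k g : ℝ))
      = fun g => ∑ i, if deg g i ≤ k then (1 : ℝ) else 0 :=
    funext fun g => Finset.natCast_card_filter _ _
  rw [hsum]
  simpa using variance_sum_le_of_covariance_le (by positivity)
    (fun i g => by split <;> simp) (fun i => .of_discrete) fun i j hij =>
      (covariance_ite_deg_le p k hij).trans <| by
        gcongr
        exact (edgeMeasure_real_edge_le p _ (hp0 _ _)).trans (hP _ _)

lemma variance_Zcard_div_sq_le (p : Fin n → Fin n → ℝ) (hp0 : ∀ a b, 0 ≤ p a b) {P : ℝ}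
    (hP : ∀ a b, p a b ≤ P) (k : ℕ) (hn : 0 < n) :
    Var[fun g => (Zcard k g : ℝ); edgeMeasure n p] / ((1 / 3) * (n : ℝ) ^ ((3 : ℝ) / 4)) ^ 2
      ≤ 9 / 4 / √n + 27 * (√n * P) := by
  have hP0 : 0 ≤ P := (hp0 ⟨0, hn⟩ ⟨0, hn⟩).trans (hP _ _)
  have hsq : ((1 / 3) * (n : ℝ) ^ ((3 : ℝ) / 4)) ^ 2 = n * √n / 9 := by
    rw [mul_pow, ← Real.rpow_natCast ((n : ℝ) ^ ((3 : ℝ) / 4)), ← Real.rpow_mul n.cast_nonneg,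
      Real.sqrt_eq_rpow, ← Real.rpow_one_add' n.cast_nonneg (by norm_num)]
    norm_num
    ring
  rw [hsq, div_le_iff₀ (by positivity)]
  refine (variance_Zcard_le p hp0 hP hP0 k).trans_eq ?_
  field_simp
  rw [Real.sq_sqrt n.cast_nonneg]
  ring

end GraphMatching

open GraphMatching in
theorem Zk_concentration_general
    (p : ∀ n, Fin n → Fin n → ℝ)
    (hp0 : ∀ n i j, 0 ≤ p n i j)
    (hpmax : Tendsto (fun n : ℕ =>
      Real.sqrt n * ⨆ e : Fin n × Fin n, p n e.1 e.2) atTop (nhds 0))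
    (k : ℕ → ℕ) :
    Tendsto
      (fun n => edgeMeasure n (p n)
        {g | |(Zcard (k n) g : ℝ) - ∫ g', (Zcard (k n) g' : ℝ) ∂edgeMeasure n (p n)|
          ≤ (1 / 3) * (n : ℝ) ^ ((3 : ℝ) / 4)})
      atTop (nhds 1) := by
  set P : ℕ → ℝ := fun n => ⨆ e : Fin n × Fin n, p n e.1 e.2
  have hbound : ∀ᶠ n : ℕ in atTop,
      Var[fun g => (Zcard (k n) g : ℝ); edgeMeasure n (p n)]
          / ((1 / 3) * (n : ℝ) ^ ((3 : ℝ) / 4)) ^ 2 ≤ 9 / 4 / √n + 27 * (√n * P n) := by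
    filter_upwards [eventually_gt_atTop 0] with n hn
    exact variance_Zcard_div_sq_le (p n) (hp0 n)
      (fun a b => le_ciSup (f := fun e : Fin n × Fin n => p n e.1 e.2)
        (Set.finite_range _).bddAbove (a, b)) (k n) hn
  have hlim : Tendsto (fun n : ℕ => 9 / 4 / √n + 27 * (√n * P n)) atTop (nhds 0) := by
    simpa using (tendsto_const_nhds.div_atTop
      (tendsto_sqrt_atTop.comp tendsto_natCast_atTop_atTop)).add (hpmax.const_mul 27)
  refine tendsto_measure_abs_sub_integral_le (fun n => .of_discrete)
    ((eventually_gt_atTop 0).mono fun n hn =>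
      mul_pos (by norm_num) (Real.rpow_pos_of_pos (Nat.cast_pos.2 hn) _)) ?_
  exact squeeze_zero' (.of_forall fun n => div_nonneg (variance_nonneg _ _) (sq_nonneg _))
    hbound hlim

open GraphMatching in
/-- Lemma 3, concentration of `|Z_k|`:
if `√n · p_max(n) → 0` then `| |Z_{k_n}| − E[|Z_{k_n}|] | ≤ n^{3/4}/3` w.h.p.,
for any choice of integers `k_n ∈ [n]`. -/
theorem Zk_concentration
    (p : ∀ n, Fin n → Fin n → ℝ)
    (hsym : ∀ n i j, p n i j = p n j i)
    (hp0 : ∀ n i j, 0 ≤ p n i j) (hp1 : ∀ n i j, p n i j ≤ 1)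
    (hdiag : ∀ n i, p n i i = 0)
    (hpmax : Tendsto (fun n : ℕ =>
      Real.sqrt n * ⨆ e : Fin n × Fin n, p n e.1 e.2) atTop (nhds 0))
    (k : ℕ → ℕ) (hk : ∀ n : ℕ, 1 ≤ n → 1 ≤ k n ∧ k n ≤ n) :
    Tendsto
      (fun n => edgeMeasure n (p n)
        {g | |(Zcard (k n) g : ℝ) - ∫ g', (Zcard (k n) g' : ℝ) ∂edgeMeasure n (p n)|
          ≤ (1 / 3) * (n : ℝ) ^ ((3 : ℝ) / 4)})
      atTop (nhds 1) :=
  Zk_concentration_general p hp0 hpmax k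
end

section
/- For each n let G ~ G(p^{(n)}) be an inhomogeneous random graph on [n], and let γ_n > 0 satisfy γ_n/sqrt(n) → 0 and p_max(n) ≤ γ_n/n. Then with probability tending to 1 as n → ∞, every subset S ⊆ [n] with |S| ≤ (3/(4γ_n²)) n spans at most 2|S| edges in the induced subgraph G{S}. -/
open MeasureTheory ProbabilityTheory Filter Real
open scoped ENNReal Classical

/-!
If a set `S` of size `s` spans more than `2s` edges, then some `2s + 1` of its `C(s, 2)` pairs are
all present, so `P(e(S) > 2s) ≤ C(C(s, 2), 2s + 1) (γ/n)^(2s+1)`. Summing over the `C(n, s)` sets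
of each size `s ≤ 3n/(4γ²)` and using `k^k ≤ e^k k!`, the `s`-th term is at most
`γ/(2n) · s² r^s` with `r = 3e³/64 < 1`. Hence the failure probability is `O(γ/n)`, and
`γ/n ≤ γ/√n → 0`.
-/

open Topology

noncomputable section

namespace GraphMatching

open Finset Nat

variable {n : ℕ}

def spannedEdges (g : EdgeSpace n) (S : Finset (Fin n)) : Finset (Fin n × Fin n) :=
  {e ∈ S ×ˢ S | e.1 < e.2 ∧ adjOf g e.1 e.2}

instance inst_s12 (q : ℝ) : IsProbabilityMeasure (bern q) := by
  unfold bern; infer_instance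

instance inst_s12_2 (p : Fin n → Fin n → ℝ) : IsProbabilityMeasure (edgeMeasure n p) := by
  unfold edgeMeasure; infer_instance

lemma bern_true (q : ℝ) : bern q {true} = min (ENNReal.ofReal q) 1 := by
  rw [bern, PMF.toMeasure_apply_singleton _ _ (measurableSet_singleton _)]
  exact ENNReal.coe_min _ _

lemma edgeMeasure_forall_mem_eq_true_le {p : Fin n → Fin n → ℝ} {b : ℝ}
    (hpb : ∀ i j, p i j ≤ b) (T : Finset (Fin n × Fin n)) :
    edgeMeasure n p {g | ∀ e ∈ T, g e = true} ≤ ENNReal.ofReal b ^ #T := by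
  have hT : {g : EdgeSpace n | ∀ e ∈ T, g e = true} = (T : Set _).pi fun _ => {true} := by
    ext; simp
  rw [hT, edgeMeasure, Measure.pi_pi_finset, ← prod_const]
  refine prod_le_prod' fun e _ => ?_
  rw [bern_true]
  exact (min_le_left _ _).trans (ENNReal.ofReal_le_ofReal (hpb _ _))

lemma edgeMeasure_lt_card_spannedEdges_le {p : Fin n → Fin n → ℝ} {b : ℝ}
    (hpb : ∀ i j, p i j ≤ b) (S : Finset (Fin n)) (k : ℕ) :
    edgeMeasure n p {g | k < #(spannedEdges g S)}
      ≤ ((#S).choose 2).choose (k + 1) * ENNReal.ofReal b ^ (k + 1) := by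
  set D : Finset (Fin n × Fin n) := {e ∈ S ×ˢ S | e.1 < e.2}
  have hsub : {g | k < #(spannedEdges g S)}
      ⊆ ⋃ T ∈ D.powersetCard (k + 1), {g | ∀ e ∈ T, g e = true} := by
    intro g hg
    obtain ⟨T, hTS, hTcard⟩ := exists_subset_card_eq (Nat.succ_le_of_lt hg)
    refine Set.mem_iUnion₂.mpr
      ⟨T, mem_powersetCard.mpr ⟨fun e he => ?_, hTcard⟩, fun e he => ?_⟩
    · obtain ⟨heS, hlt, -⟩ := mem_filter.mp (hTS he)
      exact mem_filter.mpr ⟨heS, hlt⟩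
    · obtain ⟨-, hlt, -, hadj⟩ := mem_filter.mp (hTS he)
      rwa [eidx, if_pos hlt.le] at hadj
  calc _ ≤ ∑ T ∈ D.powersetCard (k + 1), edgeMeasure n p {g | ∀ e ∈ T, g e = true} :=
        (measure_mono hsub).trans (measure_biUnion_finset_le _ _)
    _ ≤ ∑ T ∈ D.powersetCard (k + 1), ENNReal.ofReal b ^ (k + 1) :=
        sum_le_sum fun T hT =>
          (mem_powersetCard.mp hT).2 ▸ edgeMeasure_forall_mem_eq_true_le hpb T
    _ = _ := by rw [sum_const, card_powersetCard, card_product_filter_lt, nsmul_eq_mul]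

lemma pow_le_exp_mul_factorial (k : ℕ) : (k : ℝ) ^ k ≤ exp k * k ! := by
  have h := pow_div_factorial_le_exp _ (Nat.cast_nonneg (α := ℝ) k) k
  rwa [div_le_iff₀ (by positivity)] at h

lemma pow_three_mul_div_four_pow_le (s : ℕ) :
    (s : ℝ) ^ (3 * s) / 4 ^ s ≤ (exp 3 / 16) ^ s * (s ! * (2 * s + 1)!) := by
  have hs := pow_le_exp_mul_factorial s
  have h2s := pow_le_exp_mul_factorial (2 * s)
  have hfac : ((2 * s)! : ℝ) ≤ (2 * s + 1)! := by exact_mod_cast factorial_le (by omega)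
  have hexp : exp 3 ^ s = exp s * exp (2 * s : ℕ) := by
    rw [← exp_add, ← exp_nat_mul]; push_cast; ring_nf
  have h16 : (16 : ℝ) ^ s = 4 ^ s * 4 ^ s := by rw [← mul_pow]; norm_num
  have h2s' : ((2 * s : ℕ) : ℝ) ^ (2 * s) = 4 ^ s * s ^ (2 * s) := by
    push_cast; rw [mul_pow, pow_mul]; norm_num
  calc (s : ℝ) ^ (3 * s) / 4 ^ s = (s ^ s * ((2 * s : ℕ) : ℝ) ^ (2 * s)) / 16 ^ s := by
        rw [h2s', h16]; field_simp; ring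
    _ ≤ (exp s * s ! * (exp (2 * s : ℕ) * (2 * s + 1)!)) / 16 ^ s := by
        gcongr
        exact h2s.trans (by gcongr)
    _ = (exp 3 / 16) ^ s * (s ! * (2 * s + 1)!) := by
        rw [div_pow, hexp]; ring

lemma cast_choose_two_le (s : ℕ) : (s.choose 2 : ℝ) ≤ s ^ 2 / 2 := by
  simpa using Nat.choose_le_pow_div (α := ℝ) 2 s

lemma choose_mul_choose_mul_pow_le {s : ℕ} {γ c : ℝ} (hn : n ≠ 0) (hγ : 0 ≤ γ)
    (hs : s * γ ^ 2 ≤ c * n) :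
    (n.choose s : ℝ) * ((s.choose 2).choose (2 * s + 1) * (γ / n) ^ (2 * s + 1))
      ≤ γ / (2 * n) * (s ^ 2 * (c * exp 3 / 16) ^ s) := by
  have hn' : (0 : ℝ) < n := by positivity
  set x := γ / n with hx
  have hx0 : 0 ≤ x := by positivity
  have hsx : s * n * x ^ 2 ≤ c := by
    have h : s * n * x ^ 2 = s * γ ^ 2 / n := by rw [hx]; field_simp
    rwa [h, div_le_iff₀ hn']
  have hc : 0 ≤ c := le_trans (by positivity) hsx
  have hhalf : ((s : ℝ) ^ 2 / 2) ^ (2 * s + 1) = s ^ (4 * s) / 4 ^ s * (s ^ 2 / 2) := by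
    rw [pow_succ, pow_mul, show ((s : ℝ) ^ 2 / 2) ^ 2 = s ^ 4 / 4 by ring, div_pow, ← pow_mul]
  calc (n.choose s : ℝ) * ((s.choose 2).choose (2 * s + 1) * x ^ (2 * s + 1))
      ≤ n ^ s / s ! * ((s ^ 2 / 2) ^ (2 * s + 1) / (2 * s + 1)! * x ^ (2 * s + 1)) := by
        gcongr
        · exact choose_le_pow_div s n
        · exact (choose_le_pow_div _ _).trans (by gcongr; exact cast_choose_two_le s)
    _ = s ^ 2 * x / 2 * (s * n * x ^ 2) ^ s * (s ^ (3 * s) / 4 ^ s)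
          / (s ! * (2 * s + 1)!) := by
        rw [hhalf]; field_simp; ring
    _ ≤ s ^ 2 * x / 2 * c ^ s * ((exp 3 / 16) ^ s * (s ! * (2 * s + 1)!))
          / (s ! * (2 * s + 1)!) := by
        gcongr
        exact pow_three_mul_div_four_pow_le s
    _ = γ / (2 * n) * (s ^ 2 * (c * exp 3 / 16) ^ s) := by
        rw [hx]; field_simp; ring

lemma edgeMeasure_exists_dense_le {p : Fin n → Fin n → ℝ} {γ c : ℝ} (hn : n ≠ 0)
    (hγ : 0 ≤ γ) (hpmax : ∀ i j, p i j ≤ γ / n) :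
    edgeMeasure n p
        {g | ∃ S : Finset (Fin n), #S * γ ^ 2 ≤ c * n ∧ 2 * #S < #(spannedEdges g S)}
      ≤ ENNReal.ofReal (γ / (2 * n)) *
          ∑' s : ℕ, ENNReal.ofReal (s ^ 2 * (c * exp 3 / 16) ^ s) := by
  set sizes : Finset ℕ := {s ∈ range (n + 1) | s * γ ^ 2 ≤ c * n}
  have hsub : {g | ∃ S : Finset (Fin n), #S * γ ^ 2 ≤ c * n ∧ 2 * #S < #(spannedEdges g S)}
      ⊆ ⋃ s ∈ sizes, ⋃ S ∈ powersetCard s univ, {g | 2 * s < #(spannedEdges g S)} := by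
    rintro g ⟨S, hS, hdense⟩
    have hSn : #S < n + 1 := Nat.lt_succ_of_le (card_le_univ S |>.trans_eq (Fintype.card_fin n))
    exact Set.mem_biUnion (mem_filter.mpr ⟨mem_range.mpr hSn, hS⟩)
      (Set.mem_biUnion (mem_powersetCard.mpr ⟨subset_univ S, rfl⟩) hdense)
  calc _ ≤ ∑ s ∈ sizes, ∑ S ∈ powersetCard s univ,
          edgeMeasure n p {g | 2 * s < #(spannedEdges g S)} :=
        (measure_mono hsub).trans ((measure_biUnion_finset_le _ _).trans
          (sum_le_sum fun s _ => measure_biUnion_finset_le _ _))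
    _ ≤ ∑ s ∈ sizes, ∑ S ∈ powersetCard s univ,
          ((s.choose 2).choose (2 * s + 1) : ℝ≥0∞) * ENNReal.ofReal (γ / n) ^ (2 * s + 1) := by
        gcongr with s _ S hS
        obtain rfl := (mem_powersetCard.mp hS).2
        exact edgeMeasure_lt_card_spannedEdges_le hpmax S (2 * #S)
    _ = ∑ s ∈ sizes, ENNReal.ofReal
          (n.choose s * ((s.choose 2).choose (2 * s + 1) * (γ / n) ^ (2 * s + 1))) := by
        refine sum_congr rfl fun s _ => ?_
        rw [ENNReal.ofReal_mul (by positivity), ENNReal.ofReal_mul (by positivity),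
          ENNReal.ofReal_pow (by positivity), ENNReal.ofReal_natCast, ENNReal.ofReal_natCast,
          sum_const, card_powersetCard, Finset.card_univ, Fintype.card_fin, nsmul_eq_mul]
    _ ≤ ∑ s ∈ sizes,
          ENNReal.ofReal (γ / (2 * n)) * ENNReal.ofReal (s ^ 2 * (c * exp 3 / 16) ^ s) := by
        gcongr with s hs
        rw [← ENNReal.ofReal_mul (by positivity)]
        exact ENNReal.ofReal_le_ofReal (choose_mul_choose_mul_pow_le hn hγ (mem_filter.mp hs).2)
    _ ≤ _ := by
        rw [← mul_sum]
        gcongr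
        exact ENNReal.sum_le_tsum _

lemma one_sub_le_edgeMeasure_sparse {p : Fin n → Fin n → ℝ} {γ c : ℝ} (hn : n ≠ 0)
    (hγ : 0 ≤ γ) (hpmax : ∀ i j, p i j ≤ γ / n) :
    1 - ENNReal.ofReal (γ / (2 * n)) * ∑' s : ℕ, ENNReal.ofReal (s ^ 2 * (c * exp 3 / 16) ^ s)
      ≤ edgeMeasure n p {g | ∀ S : Finset (Fin n), #S * γ ^ 2 ≤ c * n →
          #(spannedEdges g S) ≤ 2 * #S} := by
  rw [← compl_compl {g | _}, prob_compl_eq_one_sub (Set.to_countable _).measurableSet]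
  refine tsub_le_tsub_left ((measure_mono fun g hg => ?_).trans
    (edgeMeasure_exists_dense_le hn hγ hpmax)) 1
  simpa using hg

lemma tendsto_div_natCast_of_tendsto_div_sqrt {f : ℕ → ℝ}
    (hf : Tendsto (fun n => f n / √n) atTop (𝓝 0)) :
    Tendsto (fun n => f n / n) atTop (𝓝 0) := by
  have hinv : Tendsto (fun n : ℕ => (√(n : ℝ))⁻¹) atTop (𝓝 0) :=
    tendsto_inv_atTop_zero.comp (tendsto_sqrt_atTop.comp tendsto_natCast_atTop_atTop)
  refine (zero_mul (0 : ℝ) ▸ hf.mul hinv).congr fun n => ?_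
  rw [← div_eq_mul_inv, div_div, mul_self_sqrt (Nat.cast_nonneg _)]

lemma exp_three_lt : exp 3 < 64 / 3 := by
  have h : exp 3 < 2.7182818286 ^ 3 := by
    rw [show (3 : ℝ) = (3 : ℕ) by norm_num, ← exp_one_pow]
    exact pow_lt_pow_left₀ exp_one_lt_d9 (exp_pos 1).le (by norm_num)
  linarith

end GraphMatching

end

open GraphMatching in
theorem small_subgraph_density_general
    (p : ∀ n, Fin n → Fin n → ℝ)
    (γ : ℕ → ℝ) (hγpos : ∀ n, 0 < γ n)
    (hγ : Tendsto (fun n => γ n / Real.sqrt n) atTop (nhds 0))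
    (hpmax : ∀ n i j, p n i j ≤ γ n / n) :
    Tendsto
      (fun n => edgeMeasure n (p n)
        {g | ∀ S : Finset (Fin n),
          (S.card : ℝ) ≤ 3 / (4 * γ n ^ 2) * n →
            ((S ×ˢ S).filter fun e => e.1 < e.2 ∧ adjOf g e.1 e.2).card ≤ 2 * S.card})
      atTop (nhds 1) := by
  have hK : ∑' s : ℕ, ENNReal.ofReal (s ^ 2 * (3 / 4 * exp 3 / 16) ^ s) ≠ ⊤ := by
    have hr : ‖3 / 4 * exp 3 / 16‖ < 1 := by
      rw [norm_of_nonneg (by positivity)]; linarith [exp_three_lt]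
    rw [← ENNReal.ofReal_tsum_of_nonneg (fun s => by positivity)
      (summable_pow_mul_geometric_of_norm_lt_one 2 hr)]
    exact ENNReal.ofReal_ne_top
  set K := ∑' s : ℕ, ENNReal.ofReal (s ^ 2 * (3 / 4 * exp 3 / 16) ^ s)
  have hfail : Tendsto (fun n => ENNReal.ofReal (γ n / (2 * n)) * K) atTop (𝓝 0) := by
    have h := ENNReal.tendsto_ofReal ((tendsto_div_natCast_of_tendsto_div_sqrt hγ).div_const 2)
    simpa [div_mul_eq_div_div_swap] using ENNReal.Tendsto.mul_const h (Or.inr hK)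
  have hlim : Tendsto (fun n => 1 - ENNReal.ofReal (γ n / (2 * n)) * K) atTop (𝓝 1) := by
    simpa using ENNReal.Tendsto.sub tendsto_const_nhds hfail (Or.inl ENNReal.one_ne_top)
  refine tendsto_of_tendsto_of_tendsto_of_le_of_le' hlim tendsto_const_nhds ?_
    (Eventually.of_forall fun n => prob_le_one)
  filter_upwards [eventually_ne_atTop 0] with n hn
  refine (one_sub_le_edgeMeasure_sparse hn (hγpos n).le (hpmax n)).trans
    (measure_mono fun g hg S hS => hg S ?_)
  have hγ2 : 0 < 4 * γ n ^ 2 := by have := hγpos n; positivity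
  rw [div_mul_eq_mul_div, le_div_iff₀ hγ2] at hS
  linarith

open GraphMatching in
/-- Lemma 5, Łuczak-type subgraph density bound:
if `γ_n/√n → 0` and `p_max(n) ≤ γ_n/n`, then w.h.p. every `S ⊆ [n]` with
`|S| ≤ (3/(4γ_n²)) n` spans at most `2|S|` edges. -/
theorem small_subgraph_density
    (p : ∀ n, Fin n → Fin n → ℝ)
    (hsym : ∀ n i j, p n i j = p n j i)
    (hp0 : ∀ n i j, 0 ≤ p n i j) (hp1 : ∀ n i j, p n i j ≤ 1)
    (hdiag : ∀ n i, p n i i = 0)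
    (γ : ℕ → ℝ) (hγpos : ∀ n, 0 < γ n)
    (hγ : Tendsto (fun n => γ n / Real.sqrt n) atTop (nhds 0))
    (hpmax : ∀ n i j, p n i j ≤ γ n / n) :
    Tendsto
      (fun n => edgeMeasure n (p n)
        {g | ∀ S : Finset (Fin n),
          (S.card : ℝ) ≤ 3 / (4 * γ n ^ 2) * n →
            ((S ×ˢ S).filter fun e => e.1 < e.2 ∧ adjOf g e.1 e.2).card ≤ 2 * S.card})
      atTop (nhds 1) :=
  small_subgraph_density_general p γ hγpos hγ hpmax
end

section
/- Let G ~ G(p) be an inhomogeneous random graph on [n], let k be a positive integer, and for i ∈ [n] let E_i := 1(deg_G(i) ≤ k). Then for any distinct i, j ∈ [n] with p_{ij} ≤ 1/2, Cov(E_i, E_j) ≤ 3 p_{ij}. -/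
open MeasureTheory ProbabilityTheory Filter Real
open scoped ENNReal Classical

/-
Let `e = {i, j}`, and let `A`, `B` be the values of `φ(deg i)`, `ψ(deg j)` (for antitone
`φ, ψ` with values in `[0, 1]`, here `1(· ≤ k)`) in the graph with `e` deleted. Deleting an edge
only lowers degrees, so `φ(deg i) ψ(deg j) ≤ A B`, while `φ(deg i) ≥ A · 1(e ∉ G)`. Now `A`, `B`
and `1(e ∉ G)` are functions of pairwise disjoint sets of independent edges, so
`E[φ(deg i) ψ(deg j)] ≤ E A · E B` and `E φ(deg i) ≥ (1 - p_ij) E A`, `E ψ(deg j) ≥ (1 - p_ij) E B`.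
Hence the covariance is at most `(1 - (1 - p_ij)²) E A · E B ≤ 2 p_ij`.
-/

open Function

theorem indepFun_pi_of_dependsOn {ι : Type*} [Fintype ι] {Ω : ι → Type*}
    [∀ i, MeasurableSpace (Ω i)] [∀ i, MeasurableSingletonClass (Ω i)] [∀ i, Countable (Ω i)]
    {μ : ∀ i, Measure (Ω i)} [∀ i, IsProbabilityMeasure (μ i)]
    {β γ : Type*} [MeasurableSpace β] [MeasurableSpace γ]
    {f : (∀ i, Ω i) → β} {g : (∀ i, Ω i) → γ} {s t : Finset ι}
    (hf : DependsOn f s) (hg : DependsOn g t) (hst : Disjoint s t) :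
    IndepFun f g (Measure.pi μ) := by
  have : Nonempty (∀ i, Ω i) := (Measure.pi μ).nonempty_of_neZero
  have : Nonempty β := ⟨f (Classical.arbitrary _)⟩
  have : Nonempty γ := ⟨g (Classical.arbitrary _)⟩
  obtain ⟨F, rfl⟩ := dependsOn_iff_exists_comp.1 hf
  obtain ⟨G, rfl⟩ := dependsOn_iff_exists_comp.1 hg
  have hcoord : iIndepFun (fun i (x : ∀ i, Ω i) => x i) (Measure.pi μ) :=
    iIndepFun_pi (X := fun i (y : Ω i) => y) fun i => aemeasurable_id
  exact (hcoord.indepFun_finset s t hst fun i => measurable_pi_apply i).comp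
    .of_discrete .of_discrete

theorem sub_mul_le_two_mul_one_sub {a b z u x y : ℝ} (ha₀ : 0 ≤ a) (ha₁ : a ≤ 1)
    (hb₀ : 0 ≤ b) (hb₁ : b ≤ 1) (hz₀ : 0 ≤ z) (hz₁ : z ≤ 1)
    (hu : u ≤ a * b) (hx : a * z ≤ x) (hy : b * z ≤ y) :
    u - x * y ≤ 2 * (1 - z) := by
  have hxy : a * z * (b * z) ≤ x * y :=
    mul_le_mul hx hy (by positivity) ((mul_nonneg ha₀ hz₀).trans hx)
  calc u - x * y ≤ a * b * (1 - z ^ 2) := by linarith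
    _ ≤ 1 - z ^ 2 := mul_le_of_le_one_left (by nlinarith) (mul_le_one₀ ha₁ hb₀ hb₁)
    _ ≤ 2 * (1 - z) := by nlinarith

namespace GraphMatching

variable {n : ℕ}

instance (x : ℝ) : IsProbabilityMeasure (bern x) := by
  unfold bern; infer_instance

theorem one_sub_le_bern_real_false {q : ℝ} (hq : 0 ≤ q) : 1 - q ≤ (bern q).real {false} := by
  simp only [Measure.real, bern, PMF.toMeasure_apply_singleton _ _ (measurableSet_singleton _),
    PMF.bernoulli_apply, cond_false, ENNReal.coe_toReal, NNReal.coe_sub (min_le_right _ _),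
    NNReal.coe_one]
  have : ((min q.toNNReal 1 : NNReal) : ℝ) ≤ q :=
    (NNReal.coe_le_coe.2 (min_le_left _ _)).trans_eq (Real.coe_toNNReal q hq)
  linarith

theorem edgeMeasure_real_edge_absent (p : Fin n → Fin n → ℝ) (e : Fin n × Fin n) :
    (edgeMeasure n p).real {g | g e = false} = (bern (p e.1 e.2)).real {false} := by
  simp only [Measure.real]
  exact congrArg ENNReal.toReal <|
    (measurePreserving_eval (fun e : Fin n × Fin n => bern (p e.1 e.2)) e).measure_preimage
      (measurableSet_singleton false).nullMeasurableSet

theorem p_eidx {p : Fin n → Fin n → ℝ} {i j : Fin n} (hsym : p j i = p i j) :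
    p (eidx i j).1 (eidx i j).2 = p i j := by
  unfold eidx; split_ifs <;> simp [hsym]

-- Only the representatives `eidx i l` (with `e.1 < e.2`) are read by `deg`; keeping just those
-- makes the incident edges of `i` and `j` meet only in `eidx i j`.
def incidentEdges (i : Fin n) : Finset (Fin n × Fin n) :=
  {e | e.1 < e.2 ∧ (e.1 = i ∨ e.2 = i)}

theorem eidx_mem_incidentEdges {i l : Fin n} (h : l ≠ i) : eidx i l ∈ incidentEdges i := by
  unfold eidx incidentEdges
  simp only [Finset.mem_filter, Finset.mem_univ, true_and]
  split_ifs with hil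
  · exact ⟨lt_of_le_of_ne hil (Ne.symm h), .inl rfl⟩
  · exact ⟨lt_of_not_ge hil, .inr rfl⟩

theorem disjoint_incidentEdges_erase {i j : Fin n} (hij : i ≠ j) :
    Disjoint ((incidentEdges i).erase (eidx i j)) ((incidentEdges j).erase (eidx i j)) := by
  rw [Finset.disjoint_left]
  rintro ⟨a, b⟩ hi hj
  simp only [Finset.mem_erase, incidentEdges, Finset.mem_filter, Finset.mem_univ, true_and] at hi hj
  obtain ⟨hne, hab, hai | hbi⟩ := hi <;> obtain ⟨-, -, haj | hbj⟩ := hj <;> subst_vars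
  · exact hij rfl
  · exact hne (if_pos hab.le).symm
  · exact hne (if_neg (not_le.2 hab)).symm
  · exact hij rfl

theorem dependsOn_deg (φ : ℕ → ℝ) (i : Fin n) :
    DependsOn (fun g : EdgeSpace n => φ (deg g i)) (incidentEdges i) := by
  intro g g' h
  simp only [deg]
  congr 3
  ext l
  simp only [adjOf]
  rcases eq_or_ne l i with rfl | hl
  · simp
  · rw [h _ (eidx_mem_incidentEdges hl)]

theorem deg_update_false_le (g : EdgeSpace n) (e : Fin n × Fin n) (i : Fin n) :
    deg (update g e false) i ≤ deg g i := by
  refine Finset.card_le_card (Finset.monotone_filter_right _ fun l _ ⟨hne, hl⟩ => ⟨hne, ?_⟩)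
  rcases eq_or_ne (eidx i l) e with rfl | he
  · simp at hl
  · rwa [update_of_ne he] at hl

section DeletedEdge

variable (p : Fin n → Fin n → ℝ)

instance : IsProbabilityMeasure (edgeMeasure n p) := by
  unfold edgeMeasure; infer_instance

theorem integral_deg_update_mul_le {φ : ℕ → ℝ} (hφ₀ : ∀ d, 0 ≤ φ d) (e : Fin n × Fin n)
    (v : Fin n) :
    (∫ g, φ (deg (update g e false) v) ∂edgeMeasure n p) *
        (edgeMeasure n p).real {g | g e = false} ≤
      ∫ g, φ (deg g v) ∂edgeMeasure n p := by
  have hZ : DependsOn ({g : EdgeSpace n | g e = false}.indicator (1 : EdgeSpace n → ℝ))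
      (({e} : Finset _) : Set _) :=
    fun g g' h => by simp [Set.indicator_apply, h e (by simp)]
  have hindep : IndepFun (fun g => φ (deg (update g e false) v))
      ({g : EdgeSpace n | g e = false}.indicator 1) (edgeMeasure n p) :=
    indepFun_pi_of_dependsOn ((dependsOn_deg φ v).update e false) hZ
      (Finset.disjoint_singleton_right.2 (Finset.notMem_erase e _))
  rw [← integral_indicator_one (.of_discrete),
    ← hindep.integral_fun_mul_eq_mul_integral (.of_discrete) (.of_discrete)]
  refine integral_mono .of_finite .of_finite fun g => ?_
  by_cases hg : g e = false
  · have hupd : update g e false = g := hg ▸ update_eq_self e g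
    simp [hg, hupd]
  · simp [hg, hφ₀]

theorem integral_deg_mul_deg_le {i j : Fin n} (hij : i ≠ j) {φ ψ : ℕ → ℝ}
    (hφ : Antitone φ) (hφ₀ : ∀ d, 0 ≤ φ d) (hψ : Antitone ψ) (hψ₀ : ∀ d, 0 ≤ ψ d) :
    ∫ g, φ (deg g i) * ψ (deg g j) ∂edgeMeasure n p ≤
      (∫ g, φ (deg (update g (eidx i j) false) i) ∂edgeMeasure n p) *
        ∫ g, ψ (deg (update g (eidx i j) false) j) ∂edgeMeasure n p := by
  have hindep : IndepFun (fun g => φ (deg (update g (eidx i j) false) i))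
      (fun g => ψ (deg (update g (eidx i j) false) j)) (edgeMeasure n p) :=
    indepFun_pi_of_dependsOn ((dependsOn_deg φ i).update _ false)
      ((dependsOn_deg ψ j).update _ false) (disjoint_incidentEdges_erase hij)
  rw [← hindep.integral_fun_mul_eq_mul_integral (.of_discrete) (.of_discrete)]
  exact integral_mono .of_finite .of_finite fun g =>
    mul_le_mul (hφ (deg_update_false_le g _ i)) (hψ (deg_update_false_le g _ j)) (hψ₀ _) (hφ₀ _)

end DeletedEdge

theorem integral_deg_mul_sub_le {p : Fin n → Fin n → ℝ} {i j : Fin n} (hij : i ≠ j)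
    (hsym : p j i = p i j) (hp₀ : 0 ≤ p i j) {φ ψ : ℕ → ℝ}
    (hφ : Antitone φ) (hφ₀ : ∀ d, 0 ≤ φ d) (hφ₁ : ∀ d, φ d ≤ 1)
    (hψ : Antitone ψ) (hψ₀ : ∀ d, 0 ≤ ψ d) (hψ₁ : ∀ d, ψ d ≤ 1) :
    (∫ g, φ (deg g i) * ψ (deg g j) ∂edgeMeasure n p) -
        (∫ g, φ (deg g i) ∂edgeMeasure n p) * ∫ g, ψ (deg g j) ∂edgeMeasure n p ≤
      2 * p i j := by
  have hunit : ∀ {χ : ℕ → ℝ}, (∀ d, 0 ≤ χ d) → (∀ d, χ d ≤ 1) → ∀ v,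
      0 ≤ ∫ g, χ (deg (update g (eidx i j) false) v) ∂edgeMeasure n p ∧
        ∫ g, χ (deg (update g (eidx i j) false) v) ∂edgeMeasure n p ≤ 1 := fun h₀ h₁ v =>
    ⟨integral_nonneg fun _ => h₀ _,
      (integral_mono .of_finite (integrable_const 1) fun _ => h₁ _).trans_eq (by simp)⟩
  have habsent : 1 - p i j ≤ (edgeMeasure n p).real {g | g (eidx i j) = false} := by
    rw [edgeMeasure_real_edge_absent, p_eidx hsym]
    exact one_sub_le_bern_real_false hp₀
  calc _ ≤ 2 * (1 - (edgeMeasure n p).real {g | g (eidx i j) = false}) :=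
        sub_mul_le_two_mul_one_sub (hunit hφ₀ hφ₁ i).1 (hunit hφ₀ hφ₁ i).2
          (hunit hψ₀ hψ₁ j).1 (hunit hψ₀ hψ₁ j).2 measureReal_nonneg measureReal_le_one
          (integral_deg_mul_deg_le p hij hφ hφ₀ hψ hψ₀)
          (integral_deg_update_mul_le p hφ₀ _ i) (integral_deg_update_mul_le p hψ₀ _ j)
    _ ≤ 2 * p i j := by linarith

end GraphMatching

open GraphMatching in
theorem lowdegree_indicator_covariance_general
    (n : ℕ) (p : Fin n → Fin n → ℝ)
    (hsym : ∀ i j, p i j = p j i)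
    (hp0 : ∀ i j, 0 ≤ p i j)
    (k : ℕ)
    (i j : Fin n) (hij : i ≠ j) :
    (∫ g, (if deg g i ≤ k then (1 : ℝ) else 0) * (if deg g j ≤ k then (1 : ℝ) else 0)
        ∂edgeMeasure n p) -
      (∫ g, (if deg g i ≤ k then (1 : ℝ) else 0) ∂edgeMeasure n p) *
        (∫ g, (if deg g j ≤ k then (1 : ℝ) else 0) ∂edgeMeasure n p) ≤
      3 * p i j := by
  have hanti : Antitone fun d : ℕ => if d ≤ k then (1 : ℝ) else 0 := fun a b hab => by
    dsimp only
    split_ifs <;> first | omega | norm_num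
  have h01 : ∀ d : ℕ, 0 ≤ (if d ≤ k then (1 : ℝ) else 0) ∧ (if d ≤ k then (1 : ℝ) else 0) ≤ 1 :=
    fun d => by split_ifs <;> norm_num
  exact (integral_deg_mul_sub_le hij (hsym j i) (hp0 i j) hanti (fun d => (h01 d).1)
    (fun d => (h01 d).2) hanti (fun d => (h01 d).1) (fun d => (h01 d).2)).trans
    (by linarith [hp0 i j])

open GraphMatching in
/-- covariance bound for low-degree indicators:
with `E_i = 1(deg_G(i) ≤ k)`, for distinct `i, j` with `p_{ij} ≤ 1/2`,
`Cov(E_i, E_j) ≤ 3 p_{ij}`. -/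
theorem lowdegree_indicator_covariance
    (n : ℕ) (p : Fin n → Fin n → ℝ)
    (hsym : ∀ i j, p i j = p j i)
    (hp0 : ∀ i j, 0 ≤ p i j) (hp1 : ∀ i j, p i j ≤ 1)
    (hdiag : ∀ i, p i i = 0)
    (k : ℕ) (hk : 0 < k)
    (i j : Fin n) (hij : i ≠ j) (hphalf : p i j ≤ 1 / 2) :
    (∫ g, (if deg g i ≤ k then (1 : ℝ) else 0) * (if deg g j ≤ k then (1 : ℝ) else 0)
        ∂edgeMeasure n p) -
      (∫ g, (if deg g i ≤ k then (1 : ℝ) else 0) ∂edgeMeasure n p) *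
        (∫ g, (if deg g j ≤ k then (1 : ℝ) else 0) ∂edgeMeasure n p) ≤
      3 * p i j :=
  lowdegree_indicator_covariance_general n p hsym hp0 k i j hij
end
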